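/- Let g ∈ ℂ^M, H ∈ ℂ^{M×N} with Hᴴg ≠ 0, q̃ ∈ ℂ^M, and real numbers σ_s² > 0, σ_i² > 0, P̄ > 0. Consider the scalar-source precoder subproblem: minimize φ(f) = (σ_s² + σ_i²)·Re(fᴴ(Hᴴg gᴴH)f) − 2σ_s²·Re((1 − q̃ᴴg)·gᴴHf) over f ∈ ℂ^N subject to ‖f‖₂² ≤ P̄. Suppose σ_s⁴·|1 − gᴴq̃|² > (σ_s² + σ_i²)²·P̄·‖Hᴴg‖₂². Then, with μ⋆ = σ_s²·P̄^{−1/2}·|1 − gᴴq̃|·‖Hᴴg‖₂ − (σ_s² + σ_i²)·‖Hᴴg‖₂², one has μ⋆ > 0 and f⋆ = σ_s²·(1 − gᴴq̃)·(μ⋆I_N + (σ_s² + σ_i²)·Hᴴg gᴴH)⁻¹·Hᴴg is a global minimizer of the problem, satisfying ‖f⋆‖₂² = P̄. -/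

import Mathlib

open Matrix ComplexOrder

/-- The Euclidean norm ‖x‖₂ = √(xᴴx) of a complex vector. -/
noncomputable def eucNorm {n : ℕ} (x : Fin n → ℂ) : ℝ :=
  Real.sqrt ((star x ⬝ᵥ x).re)

/-!
Write u = Hᴴg, c = 1 − gᴴq̃ and a = σ_s² + σ_i². The objective depends on f only through
z = uᴴf, namely φ(f) = a|z|² − 2σ_s² Re(c̄z), and by Cauchy–Schwarz the power constraint gives
|z| ≤ T := ‖u‖√P̄. The case hypothesis says aT < σ_s²|c|: the unconstrained minimizer of the
scalar quadratic lies outside the disc |z| ≤ T, so on the disc the minimum is attained at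
z = (T/|c|)c. Finally u is an eigenvector of μ⋆I + a uuᴴ with eigenvalue
μ⋆ + a‖u‖² = σ_s²|c|‖u‖/√P̄, which makes f⋆ the multiple of u with uᴴf⋆ = (T/|c|)c and
‖f⋆‖ = √P̄.
-/

section eucNorm

variable {n : ℕ}

lemma eucNorm_eq_norm_toLp (x : Fin n → ℂ) : eucNorm x = ‖WithLp.toLp 2 x‖ := by
  rw [eucNorm, ← Real.sqrt_sq (norm_nonneg (WithLp.toLp 2 x)), @norm_sq_eq_re_inner ℂ,
    EuclideanSpace.inner_toLp_toLp, dotProduct_comm]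
  rfl

lemma star_dotProduct_self_eq (x : Fin n → ℂ) : star x ⬝ᵥ x = ((eucNorm x ^ 2 : ℝ) : ℂ) := by
  have h := inner_self_eq_norm_sq_to_K (𝕜 := ℂ) (WithLp.toLp 2 x)
  rw [EuclideanSpace.inner_toLp_toLp, dotProduct_comm] at h
  rw [h, eucNorm_eq_norm_toLp]
  norm_cast

lemma norm_star_dotProduct_le (x y : Fin n → ℂ) : ‖star x ⬝ᵥ y‖ ≤ eucNorm x * eucNorm y := by
  rw [eucNorm_eq_norm_toLp, eucNorm_eq_norm_toLp, dotProduct_comm,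
    ← EuclideanSpace.inner_toLp_toLp]
  exact norm_inner_le_norm _ _

lemma eucNorm_smul (k : ℂ) (x : Fin n → ℂ) : eucNorm (k • x) = ‖k‖ * eucNorm x := by
  rw [eucNorm_eq_norm_toLp, eucNorm_eq_norm_toLp, WithLp.toLp_smul, norm_smul]

lemma eucNorm_pos {x : Fin n → ℂ} (hx : x ≠ 0) : 0 < eucNorm x := by
  rw [eucNorm_eq_norm_toLp, norm_pos_iff]
  simpa using hx

end eucNorm

section RankOne

variable {n : Type*} [Fintype n]

lemma smul_one_add_smul_vecMulVec_mulVec [DecidableEq n] {R : Type*} [CommRing R]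
    (μ a : R) (u v : n → R) :
    (μ • 1 + a • vecMulVec u v) *ᵥ u = (μ + a * (v ⬝ᵥ u)) • u := by
  rw [add_mulVec, smul_mulVec, smul_mulVec, one_mulVec, vecMulVec_mulVec, op_smul_eq_smul,
    add_smul, mul_smul]

lemma inv_mulVec_eq_inv_smul_of_mulVec_eq_smul [DecidableEq n] {K : Type*} [Field K]
    {B : Matrix n n K} (hB : IsUnit B) {u : n → K} {β : K} (hβ : β ≠ 0) (h : B *ᵥ u = β • u) :
    B⁻¹ *ᵥ u = β⁻¹ • u := by
  have := hB.invertible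
  apply inv_mulVec_eq_vec
  rw [mulVec_smul, h, smul_smul, inv_mul_cancel₀ hβ, one_smul]

lemma posDef_smul_one_add_smul_vecMulVec_self_star [DecidableEq n] {μ a : ℝ} (hμ : 0 < μ)
    (ha : 0 ≤ a) (u : n → ℂ) :
    ((μ : ℂ) • 1 + (a : ℂ) • vecMulVec u (star u)).PosDef :=
  (PosDef.one.smul (by exact_mod_cast hμ)).add_posSemidef
    ((posSemidef_vecMulVec_self_star u).smul (by exact_mod_cast ha))

lemma re_star_dotProduct_vecMulVec_self_star_mulVec (u f : n → ℂ) :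
    (star f ⬝ᵥ (vecMulVec u (star u) *ᵥ f)).re = ‖star u ⬝ᵥ f‖ ^ 2 := by
  rw [vecMulVec_mulVec, op_smul_eq_smul, dotProduct_smul, smul_eq_mul, star_dotProduct f u,
    Complex.star_def, Complex.mul_conj', ← Complex.ofReal_pow, Complex.ofReal_re]

end RankOne

lemma smul_one_add_smul_vecMulVec_self_star_inv_mulVec {N : ℕ} {μ a : ℝ} (hμ : 0 < μ)
    (ha : 0 ≤ a) (u : Fin N → ℂ) :
    ((μ : ℂ) • 1 + (a : ℂ) • vecMulVec u (star u))⁻¹ *ᵥ u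
      = (((μ + a * eucNorm u ^ 2)⁻¹ : ℝ) : ℂ) • u := by
  have hβ : 0 < μ + a * eucNorm u ^ 2 := by positivity
  rw [Complex.ofReal_inv]
  refine inv_mulVec_eq_inv_smul_of_mulVec_eq_smul
    (posDef_smul_one_add_smul_vecMulVec_self_star hμ ha u).isUnit (by exact_mod_cast hβ.ne') ?_
  rw [smul_one_add_smul_vecMulVec_mulVec, star_dotProduct_self_eq]
  push_cast
  rfl

lemma quadratic_re_conj_mul_ge_of_norm_le {a b T : ℝ} {c z : ℂ} (ha : 0 ≤ a) (hb : 0 ≤ b)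
    (hz : ‖z‖ ≤ T) (hT : a * T ≤ b * ‖c‖) :
    a * T ^ 2 - 2 * b * (‖c‖ * T) ≤ a * ‖z‖ ^ 2 - 2 * b * (starRingEnd ℂ c * z).re := by
  have hre : (starRingEnd ℂ c * z).re ≤ ‖c‖ * ‖z‖ := by
    simpa using Complex.re_le_norm (starRingEnd ℂ c * z)
  nlinarith [norm_nonneg z, mul_le_mul_of_nonneg_left hz ha, mul_le_mul_of_nonneg_left hre hb]

lemma quadratic_re_conj_mul_of_aligned (a b : ℝ) {T : ℝ} (hT : 0 ≤ T) {c : ℂ} (hc : c ≠ 0) :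
    a * ‖((T / ‖c‖ : ℝ) : ℂ) * c‖ ^ 2 - 2 * b * (starRingEnd ℂ c * (((T / ‖c‖ : ℝ) : ℂ) * c)).re
      = a * T ^ 2 - 2 * b * (‖c‖ * T) := by
  have hc' : 0 < ‖c‖ := norm_pos_iff.mpr hc
  rw [norm_mul, Complex.norm_real, Real.norm_of_nonneg (by positivity), mul_left_comm,
    Complex.conj_mul', ← Complex.ofReal_pow, ← Complex.ofReal_mul, Complex.ofReal_re]
  field_simp

lemma mul_mul_sqrt_lt_of_sq_mul_lt {a ν P b : ℝ} (hP : 0 ≤ P) (hb : 0 ≤ b)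
    (h : a ^ 2 * P * ν ^ 2 < b ^ 2) : a * (ν * √P) < b :=
  lt_of_pow_lt_pow_left₀ 2 hb (by rw [mul_pow, mul_pow, Real.sq_sqrt hP]; linarith)

lemma mul_inv_mul_mul_sub_mul_sq_pos {σ C ν s a : ℝ} (hν : 0 < ν) (hs : 0 < s)
    (h : a * (ν * s) < σ * C) : 0 < σ * s⁻¹ * C * ν - a * ν ^ 2 := by
  have : σ * s⁻¹ * C * ν - a * ν ^ 2 = ν / s * (σ * C - a * (ν * s)) := by
    field_simp
  rw [this]
  exact mul_pos (div_pos hν hs) (sub_pos.mpr h)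

section AlignedMultiple

variable {N : ℕ} {u : Fin N → ℂ} {c : ℂ} {s : ℝ}

lemma smul_inv_mulVec_eq_aligned {σ a : ℝ} (hu : u ≠ 0) (hc : c ≠ 0) (hσ : 0 < σ) (hs : 0 < s)
    (ha : 0 ≤ a) (hμ : 0 < σ * s⁻¹ * ‖c‖ * eucNorm u - a * eucNorm u ^ 2) :
    ((σ : ℂ) * c) • ((((σ * s⁻¹ * ‖c‖ * eucNorm u - a * eucNorm u ^ 2 : ℝ) : ℂ) • 1
        + (a : ℂ) • vecMulVec u (star u))⁻¹ *ᵥ u)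
      = (((s / (eucNorm u * ‖c‖) : ℝ) : ℂ) * c) • u := by
  have hν := eucNorm_pos hu
  have hc' : (‖c‖ : ℂ) ≠ 0 := by exact_mod_cast (norm_pos_iff.mpr hc).ne'
  rw [smul_one_add_smul_vecMulVec_self_star_inv_mulVec hμ ha, smul_smul, sub_add_cancel]
  congr 1
  push_cast
  field_simp

lemma eucNorm_aligned (hu : u ≠ 0) (hc : c ≠ 0) (hs : 0 ≤ s) :
    eucNorm ((((s / (eucNorm u * ‖c‖) : ℝ) : ℂ) * c) • u) = s := by
  have hν := eucNorm_pos hu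
  have hc' := norm_pos_iff.mpr hc
  rw [eucNorm_smul, norm_mul, Complex.norm_real, Real.norm_of_nonneg (by positivity)]
  field_simp

lemma star_dotProduct_aligned (hu : u ≠ 0) (hc : c ≠ 0) :
    star u ⬝ᵥ ((((s / (eucNorm u * ‖c‖) : ℝ) : ℂ) * c) • u)
      = ((eucNorm u * s / ‖c‖ : ℝ) : ℂ) * c := by
  have hν : (eucNorm u : ℂ) ≠ 0 := by exact_mod_cast (eucNorm_pos hu).ne'
  have hc' : (‖c‖ : ℂ) ≠ 0 := by exact_mod_cast (norm_pos_iff.mpr hc).ne'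
  rw [dotProduct_smul, star_dotProduct_self_eq, smul_eq_mul]
  push_cast
  field_simp

end AlignedMultiple

/-- scalar-source precoder, positive multiplier case: minimize
φ(f) = (σ_s²+σ_i²)Re(fᴴ(Hᴴg gᴴH)f) − 2σ_s²Re((1 − q̃ᴴg)gᴴHf) over ‖f‖₂² ≤ P̄.
If σ_s⁴|1 − gᴴq̃|² > (σ_s²+σ_i²)²P̄‖Hᴴg‖₂², then with
μ⋆ = σ_s²P̄^{−1/2}|1 − gᴴq̃|‖Hᴴg‖₂ − (σ_s²+σ_i²)‖Hᴴg‖₂² one has μ⋆ > 0, and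
f⋆ = σ_s²(1 − gᴴq̃)(μ⋆I + (σ_s²+σ_i²)Hᴴg gᴴH)⁻¹Hᴴg is a global minimizer with
‖f⋆‖₂² = P̄. -/
theorem scalar_precoder_positive_multiplier {M N : ℕ}
    (g : Fin M → ℂ) (H : Matrix (Fin M) (Fin N) ℂ) (hHg : Hᴴ *ᵥ g ≠ 0)
    (qt : Fin M → ℂ) (σs2 σi2 Pb : ℝ)
    (hσs : 0 < σs2) (hσi : 0 < σi2) (hPb : 0 < Pb)
    (hcase : σs2 ^ 2 * ‖1 - star g ⬝ᵥ qt‖ ^ 2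
      > (σs2 + σi2) ^ 2 * Pb * (eucNorm (Hᴴ *ᵥ g)) ^ 2) :
    let u : Fin N → ℂ := Hᴴ *ᵥ g
    let A : Matrix (Fin N) (Fin N) ℂ := vecMulVec u (star u)
    let φ : (Fin N → ℂ) → ℝ := fun f =>
      (σs2 + σi2) * (star f ⬝ᵥ (A *ᵥ f)).re
        - 2 * σs2 * ((1 - star qt ⬝ᵥ g) * (star u ⬝ᵥ f)).re
    let μs : ℝ := σs2 * (Real.sqrt Pb)⁻¹ * ‖1 - star g ⬝ᵥ qt‖ * eucNorm u
        - (σs2 + σi2) * (eucNorm u) ^ 2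
    let fs : Fin N → ℂ :=
      ((σs2 : ℂ) * (1 - star g ⬝ᵥ qt)) •
        (((μs : ℂ) • 1 + ((σs2 + σi2 : ℝ) : ℂ) • A)⁻¹ *ᵥ u)
    0 < μs ∧ (eucNorm fs) ^ 2 = Pb ∧
      ∀ f : Fin N → ℂ, (eucNorm f) ^ 2 ≤ Pb → φ fs ≤ φ f := by
  intro u A φ μs fs
  set c := 1 - star g ⬝ᵥ qt
  set a := σs2 + σi2
  set ν := eucNorm u
  set s := √Pb
  have ha : 0 ≤ a := add_nonneg hσs.le hσi.le
  have hs : 0 < s := Real.sqrt_pos.mpr hPb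
  have hν : 0 < ν := eucNorm_pos hHg
  have hc : c ≠ 0 := by
    rintro hc
    have : 0 < σs2 ^ 2 * ‖c‖ ^ 2 := lt_of_le_of_lt (by positivity) hcase
    simp [hc] at this
  have hT : a * (ν * s) < σs2 * ‖c‖ :=
    mul_mul_sqrt_lt_of_sq_mul_lt hPb.le (by positivity) (by rwa [mul_pow])
  have hμ : 0 < μs := mul_inv_mul_mul_sub_mul_sq_pos hν hs hT
  have hfs : fs = (((s / (ν * ‖c‖) : ℝ) : ℂ) * c) • u :=
    smul_inv_mulVec_eq_aligned hHg hc hσs hs ha hμ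
  have hφ : ∀ f, φ f = a * ‖star u ⬝ᵥ f‖ ^ 2 - 2 * σs2 * (starRingEnd ℂ c * (star u ⬝ᵥ f)).re := by
    intro f
    simp only [φ, A]
    rw [re_star_dotProduct_vecMulVec_self_star_mulVec, star_dotProduct qt g, map_sub, map_one]
    rfl
  refine ⟨hμ, by rw [hfs, eucNorm_aligned hHg hc hs.le, Real.sq_sqrt hPb.le], fun f hf => ?_⟩
  have hz : ‖star u ⬝ᵥ f‖ ≤ ν * s := (norm_star_dotProduct_le u f).trans
    (mul_le_mul_of_nonneg_left (Real.le_sqrt_of_sq_le hf) hν.le)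
  calc φ fs = a * (ν * s) ^ 2 - 2 * σs2 * (‖c‖ * (ν * s)) := by
        rw [hφ, hfs, star_dotProduct_aligned hHg hc,
          quadratic_re_conj_mul_of_aligned a σs2 (by positivity) hc]
    _ ≤ φ f := by
        rw [hφ]; exact quadratic_re_conj_mul_ge_of_norm_le ha hσs.le hz hT.le
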